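/- Let D be a finite index set, o_{u,i} independent Bernoulli(p_{u,i}), constants e_{u,i}, \hat e_{u,i}, \hat p_{u,i} > 0. Define the DR loss L = (1/|D|) * sum over (u,i) of [\hat e_{u,i} + o_{u,i}(e_{u,i} - \hat e_{u,i})/\hat p_{u,i}]. Then Var(L) = (1/|D|^2) * sum over (u,i) of p_{u,i}(1-p_{u,i}) * (e_{u,i} - \hat e_{u,i})^2 / \hat p_{u,i}^2, and the bias |(1/|D|) sum e_{u,i} - E[L]| = (1/|D|)·|sum over (u,i) of (1 - p_{u,i}/\hat p_{u,i})·(e_{u,i} - \hat e_{u,i})|. -/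

import Mathlib

open MeasureTheory ProbabilityTheory

theorem stmt_18 {Ω : Type*} [MeasureSpace Ω] [IsProbabilityMeasure (ℙ : Measure Ω)]
    {ι : Type*} [Fintype ι] [Nonempty ι]
    (o : ι → Ω → ℝ) (p : ι → ℝ) (e ehat phat : ι → ℝ)
    (hp : ∀ i, p i ∈ Set.Icc (0:ℝ) 1)
    (hphat : ∀ i, 0 < phat i)
    (hmeas : ∀ i, Measurable (o i))
    (hind : iIndepFun o ℙ)
    (hvals : ∀ i, ∀ᵐ ω ∂(ℙ : Measure Ω), o i ω = 0 ∨ o i ω = 1)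
    (hmean : ∀ i, ∫ ω, o i ω ∂(ℙ : Measure Ω) = p i)
    (L : Ω → ℝ)
    (hL : L = fun ω => (1 / (Fintype.card ι : ℝ)) *
        ∑ i, (ehat i + o i ω * (e i - ehat i) / phat i)) :
    variance L ℙ = (1 / (Fintype.card ι : ℝ) ^ 2) *
        ∑ i, p i * (1 - p i) * (e i - ehat i) ^ 2 / (phat i) ^ 2 ∧
    |(1 / (Fintype.card ι : ℝ)) * ∑ i, e i - ∫ ω, L ω ∂(ℙ : Measure Ω)|
      = (1 / (Fintype.card ι : ℝ)) *
        |∑ i, (1 - p i / phat i) * (e i - ehat i)| := by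
  classical
  set c : ℝ := 1 / (Fintype.card ι : ℝ) with hc
  set a : ι → ℝ := fun i => (e i - ehat i) / phat i with ha
  set X : ι → Ω → ℝ := fun i ω => ehat i + o i ω * a i with hX
  have hXL : L = fun ω => c * ∑ i, X i ω := by
    rw [hL]; funext ω
    simp only [hX, ha, mul_div_assoc]
  -- basic integrability facts
  have hbound : ∀ i, ∀ᵐ ω ∂(ℙ : Measure Ω), o i ω ∈ Set.Icc (0:ℝ) 1 := by
    intro i
    filter_upwards [hvals i] with ω h
    rcases h with h | h <;> simp [h]
  have hoℒ : ∀ i, MemLp (o i) 2 (ℙ : Measure Ω) := fun i =>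
    memLp_of_bounded (hbound i) (hmeas i).aestronglyMeasurable 2
  have hXℒ : ∀ i, MemLp (X i) 2 (ℙ : Measure Ω) := by
    intro i
    have := ((hoℒ i).const_mul (a i))
    simp_rw [mul_comm (a i)] at this
    exact (memLp_const (ehat i)).add this
  have hoint : ∀ i, Integrable (o i) (ℙ : Measure Ω) := fun i => (hoℒ i).integrable one_le_two
  have hosq : ∀ i, ∀ᵐ ω ∂(ℙ : Measure Ω), o i ω ^ 2 = o i ω := by
    intro i
    filter_upwards [hvals i] with ω h
    rcases h with h | h <;> simp [h]
  -- mean of each X i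
  have hXmean : ∀ i, ∫ ω, X i ω ∂(ℙ : Measure Ω) = ehat i + a i * p i := by
    intro i
    simp only [hX]
    rw [integral_add (integrable_const _) ((hoint i).mul_const _)]
    rw [integral_const, integral_mul_const, hmean]
    simp [mul_comm]
  -- variance of each X i
  have hXvar : ∀ i, variance (X i) (ℙ : Measure Ω) = a i ^ 2 * (p i * (1 - p i)) := by
    intro i
    rw [variance_eq_sub (hXℒ i)]
    have h2 : ∫ ω, (X i ω) ^ 2 ∂(ℙ : Measure Ω)
        = ehat i ^ 2 + (2 * ehat i * a i + a i ^ 2) * p i := by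
      have hcongr : ∫ ω, (X i ω) ^ 2 ∂(ℙ : Measure Ω)
          = ∫ ω, (ehat i ^ 2 + (2 * ehat i * a i + a i ^ 2) * o i ω) ∂(ℙ : Measure Ω) := by
        refine integral_congr_ae ?_
        filter_upwards [hosq i] with ω h
        simp only [hX]
        have : (ehat i + o i ω * a i) ^ 2
            = ehat i ^ 2 + 2 * ehat i * a i * o i ω + a i ^ 2 * (o i ω ^ 2) := by ring
        rw [this, h]; ring
      rw [hcongr, integral_add (integrable_const _) ((hoint i).const_mul _),
        integral_const, integral_const_mul, hmean]
      simp
    have h1 := hXmean i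
    simp only [Pi.pow_apply] at *
    calc (∫ ω, (X i ω) ^ 2 ∂(ℙ : Measure Ω)) - (∫ ω, X i ω ∂(ℙ : Measure Ω)) ^ 2
        = (ehat i ^ 2 + (2 * ehat i * a i + a i ^ 2) * p i) - (ehat i + a i * p i) ^ 2 := by
          rw [h2, h1]
      _ = a i ^ 2 * (p i * (1 - p i)) := by ring
  -- pairwise independence of the X i
  have hXind : Set.Pairwise ↑(Finset.univ : Finset ι)
      fun i j => IndepFun (X i) (X j) (ℙ : Measure Ω) := by
    intro i _ j _ hij
    have h := (hind.indepFun hij).comp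
      (φ := fun x : ℝ => ehat i + x * a i) (ψ := fun x : ℝ => ehat j + x * a j)
      (by fun_prop) (by fun_prop)
    exact h
  -- variance of L
  have hvar : variance L (ℙ : Measure Ω)
      = c ^ 2 * ∑ i, a i ^ 2 * (p i * (1 - p i)) := by
    have hsum : variance (∑ i, X i) (ℙ : Measure Ω)
        = ∑ i, variance (X i) (ℙ : Measure Ω) :=
      IndepFun.variance_sum (fun i _ => hXℒ i) hXind
    have : L = fun ω => c * (∑ i, X i) ω := by
      rw [hXL]; funext ω; simp
    rw [this, variance_const_mul, hsum]
    simp_rw [hXvar]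
  -- mean of L
  have hLmean : ∫ ω, L ω ∂(ℙ : Measure Ω) = c * ∑ i, (ehat i + a i * p i) := by
    rw [hXL]
    rw [integral_const_mul]
    rw [integral_finset_sum _ (fun i _ => (hXℒ i).integrable one_le_two)]
    simp_rw [hXmean]
  constructor
  · rw [hvar, hc, div_pow, one_pow]
    congr 1
    refine Finset.sum_congr rfl fun i _ => ?_
    have hpi := (hphat i).ne'
    simp only [ha]
    field_simp
  · rw [hLmean]
    have key : c * ∑ i, e i - c * ∑ i, (ehat i + a i * p i)
        = c * ∑ i, (1 - p i / phat i) * (e i - ehat i) := by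
      rw [← mul_sub, ← Finset.sum_sub_distrib]
      congr 1
      refine Finset.sum_congr rfl fun i _ => ?_
      have hpi := (hphat i).ne'
      simp only [ha]
      field_simp
      ring
    rw [key, abs_mul, abs_of_nonneg (by positivity : (0:ℝ) ≤ c)]
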